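/- For given seed functions f, f' ∈ L^p(I) (1 ≤ p ≤ ∞) and every base function b ∈ L^p(I), it holds that ‖(f *_T b) − (f' *_T b)‖_p ≤ (1/(1−Λ)) ‖f − f'‖_p. -/

import Mathlib

open MeasureTheory ENNReal

noncomputable section

/-- The inverse of the increasing affine map `L n` sending `[x 0, x N]` onto
`[x n, x (n+1)]` (so `L n (x 0) = x n.castSucc` and `L n (x N) = x n.succ`). -/
def Linv {N : ℕ} (x : Fin (N + 1) → ℝ) (n : Fin N) (y : ℝ) : ℝ :=
  x 0 + (y - x n.castSucc) * (x (Fin.last N) - x 0) / (x n.succ - x n.castSucc)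

/-- The subinterval `I n` of the partition: `[x 0, x 1]` for `n = 0` and
`(x n, x (n+1)]` otherwise. -/
def subInt {N : ℕ} (x : Fin (N + 1) → ℝ) (n : Fin N) : Set ℝ :=
  if n.val = 0 then Set.Icc (x n.castSucc) (x n.succ)
  else Set.Ioc (x n.castSucc) (x n.succ)

/-- `h` is the image of `g` under the Read–Bajraktarević operator `T_{f,b}` with
scale functions `α`, almost everywhere: on each `I n`,
`h = f + (α n ∘ Lₙ⁻¹) · ((g - b) ∘ Lₙ⁻¹)`. -/
def RBEq {N : ℕ} (μ : Measure ℝ) (x : Fin (N + 1) → ℝ) (α : Fin N → ℝ → ℝ)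
    (f b g h : ℝ → ℝ) : Prop :=
  ∀ n : Fin N, ∀ᵐ t ∂μ, t ∈ subInt x n →
    h t = f t + α n (Linv x n t) * (g (Linv x n t) - b (Linv x n t))

/-- `h` satisfies the self-referential equation of `T_{f,b}`, i.e. `h` is a fixed
point of `T_{f,b}`; `h` is then the fractal convolution `f *_T b`. -/
def SelfRef {N : ℕ} (μ : Measure ℝ) (x : Fin (N + 1) → ℝ) (α : Fin N → ℝ → ℝ)
    (f b h : ℝ → ℝ) : Prop :=
  RBEq μ x α f b h h

/-!
The difference `e = fb - f'b` of two fractal convolutions with the same base satisfies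
`e = (f - f') + (αₙ ∘ Lₙ⁻¹) · (e ∘ Lₙ⁻¹)` on `Iₙ`. Since `Lₙ⁻¹` pushes Lebesgue measure on `Iₙ`
forward to `aₙ` times Lebesgue measure on `I`, with `∑ aₙ = 1`, the second term has `L^p` norm at
most `Λ ‖e‖_p`. Hence `‖e‖_p ≤ ‖f - f'‖_p + Λ ‖e‖_p`.
-/

open Set
open scoped Function

section PiecewisePullback

variable {X Y ι E : Type*} [MeasurableSpace X] [MeasurableSpace Y] [NormedAddCommGroup E]
  {μ : Measure X} {ρ : Measure Y}

lemma lintegral_comp_of_map_eq_smul {φ : X → Y} {c : ℝ≥0∞} (hφ : AEMeasurable φ μ)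
    (hmap : μ.map φ = c • ρ) {f : Y → ℝ≥0∞} (hf : AEMeasurable f ρ) :
    ∫⁻ x, f (φ x) ∂μ = c * ∫⁻ y, f y ∂ρ := by
  rw [← lintegral_map' (hmap ▸ hf.smul_measure c) hφ, hmap, lintegral_smul_measure, smul_eq_mul]

lemma eLpNorm_top_comp_le_of_map_eq_smul {φ : X → Y} {c : ℝ≥0∞} (hφ : AEMeasurable φ μ)
    (hmap : μ.map φ = c • ρ) {v : Y → E} (hv : AEStronglyMeasurable v ρ) :
    eLpNorm (v ∘ φ) ∞ μ ≤ eLpNorm v ∞ ρ := by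
  rw [← eLpNorm_map_measure (hmap ▸ hv.smul_measure c) hφ, hmap]
  exact eLpNormEssSup_mono_measure _ (Measure.AbsolutelyContinuous.rfl.smul_left c)

variable [Fintype ι] {s : ι → Set X} {φ : ι → X → Y} {w : ι → ℝ≥0∞} {u : ι → Y → E} {g : X → E}

theorem eLpNorm_le_of_ae_eq_comp {p : ℝ≥0∞} (hs : ∀ i, MeasurableSet (s i))
    (hdisj : Pairwise (Disjoint on s)) (hcover : ∀ᵐ x ∂μ, x ∈ ⋃ i, s i)
    (hφ : ∀ i, AEMeasurable (φ i) (μ.restrict (s i)))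
    (hmap : ∀ i, (μ.restrict (s i)).map (φ i) = w i • ρ) (hw : ∑ i, w i ≤ 1)
    (hu : ∀ i, AEStronglyMeasurable (u i) ρ) (hg : ∀ i, g =ᵐ[μ.restrict (s i)] u i ∘ φ i)
    {C : ℝ≥0∞} (huC : ∀ i, eLpNorm (u i) p ρ ≤ C) :
    eLpNorm g p μ ≤ C := by
  have hμ : μ = μ.restrict (⋃ i, s i) := (Measure.restrict_eq_self_of_ae_mem hcover).symm
  obtain rfl | rfl | hp := ENNReal.trichotomy p
  · simp
  · rw [eLpNorm_exponent_top]
    refine eLpNormEssSup_le_of_ae_enorm_bound ?_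
    rw [hμ, ae_restrict_iUnion_iff]
    intro i
    filter_upwards [enorm_ae_le_eLpNormEssSup g (μ.restrict (s i))] with x hx
    calc ‖g x‖ₑ ≤ eLpNorm g ∞ (μ.restrict (s i)) := hx
      _ = eLpNorm (u i ∘ φ i) ∞ (μ.restrict (s i)) := eLpNorm_congr_ae (hg i)
      _ ≤ eLpNorm (u i) ∞ ρ := eLpNorm_top_comp_le_of_map_eq_smul (hφ i) (hmap i) (hu i)
      _ ≤ C := huC i
  · obtain ⟨hp0, hptop⟩ := ENNReal.toReal_pos_iff.1 hp
    set q := p.toReal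
    have hpiece (i : ι) : ∫⁻ x in s i, ‖g x‖ₑ ^ q ∂μ = w i * ∫⁻ y, ‖u i y‖ₑ ^ q ∂ρ :=
      (lintegral_congr_ae ((hg i).fun_comp fun z => ‖z‖ₑ ^ q)).trans
        (lintegral_comp_of_map_eq_smul (hφ i) (hmap i) ((hu i).enorm.pow_const q))
    have huC' (i : ι) : ∫⁻ y, ‖u i y‖ₑ ^ q ∂ρ ≤ C ^ q := by
      have := huC i
      rwa [eLpNorm_eq_lintegral_rpow_enorm_toReal hp0.ne' hptop.ne, one_div,
        rpow_inv_le_iff hp] at this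
    rw [eLpNorm_eq_lintegral_rpow_enorm_toReal hp0.ne' hptop.ne, one_div, rpow_inv_le_iff hp]
    calc ∫⁻ x, ‖g x‖ₑ ^ q ∂μ = ∑ i, ∫⁻ x in s i, ‖g x‖ₑ ^ q ∂μ := by
          conv_lhs => rw [hμ]
          rw [lintegral_iUnion hs hdisj, tsum_fintype]
      _ ≤ ∑ i, w i * C ^ q := by
          gcongr with i
          rw [hpiece i]
          gcongr
          exact huC' i
      _ = (∑ i, w i) * C ^ q := Finset.sum_mul .. |>.symm
      _ ≤ C ^ q := mul_le_of_le_one_left' hw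

end PiecewisePullback

section Partition

variable {N : ℕ} {x : Fin (N + 1) → ℝ}

/-- The slope `aₙ = |Iₙ| / |I|` of `Lₙ`. -/
def lengthRatio (x : Fin (N + 1) → ℝ) (n : Fin N) : ℝ :=
  (x n.succ - x n.castSucc) / (x (Fin.last N) - x 0)

lemma succ_sub_castSucc_pos (hx : StrictMono x) (n : Fin N) : 0 < x n.succ - x n.castSucc :=
  sub_pos.2 (hx Fin.castSucc_lt_succ)

lemma last_sub_zero_pos (hx : StrictMono x) (hN : 0 < N) : 0 < x (Fin.last N) - x 0 :=
  sub_pos.2 (hx (Fin.pos_iff_ne_zero.2 (by simp [Fin.ext_iff, hN.ne'])))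

lemma lengthRatio_pos (hx : StrictMono x) (hN : 0 < N) (n : Fin N) : 0 < lengthRatio x n :=
  div_pos (succ_sub_castSucc_pos hx n) (last_sub_zero_pos hx hN)

lemma Linv_eq (n : Fin N) (y : ℝ) :
    Linv x n y = (lengthRatio x n)⁻¹ * y + (x 0 - (lengthRatio x n)⁻¹ * x n.castSucc) := by
  rw [Linv, lengthRatio, inv_div]; ring

lemma sum_lengthRatio (hx : StrictMono x) (hN : 0 < N) : ∑ n, lengthRatio x n = 1 := by
  obtain ⟨m, rfl⟩ : ∃ m, N = m + 1 := ⟨N - 1, by omega⟩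
  have htel := Fin.sum_Iic_sub (Fin.last m) x
  rw [Finset.eq_univ_of_forall fun i => Finset.mem_Iic.2 (Fin.le_last i)] at htel
  simp only [lengthRatio, ← Finset.sum_div, htel, Fin.succ_last]
  exact div_self (last_sub_zero_pos hx hN).ne'

lemma measurable_Linv (n : Fin N) : Measurable (Linv x n) := by
  unfold Linv; fun_prop

lemma strictMono_Linv (hx : StrictMono x) (hN : 0 < N) (n : Fin N) : StrictMono (Linv x n) := by
  rw [funext (Linv_eq n)]
  exact (strictMono_id.const_mul (inv_pos.2 (lengthRatio_pos hx hN n))).add_const _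

lemma Linv_castSucc (n : Fin N) : Linv x n (x n.castSucc) = x 0 := by
  simp [Linv]

lemma Linv_succ (hx : StrictMono x) (n : Fin N) : Linv x n (x n.succ) = x (Fin.last N) := by
  rw [Linv, mul_div_right_comm, div_self (succ_sub_castSucc_pos hx n).ne']
  ring

lemma preimage_Linv_Icc (hx : StrictMono x) (hN : 0 < N) (n : Fin N) :
    Linv x n ⁻¹' Icc (x 0) (x (Fin.last N)) = Icc (x n.castSucc) (x n.succ) := by
  ext y
  rw [← Linv_castSucc (x := x) n, ← Linv_succ hx n]
  simp only [mem_preimage, mem_Icc, (strictMono_Linv hx hN n).le_iff_le]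

lemma map_Linv_volume (hx : StrictMono x) (hN : 0 < N) (n : Fin N) :
    volume.map (Linv x n) = ENNReal.ofReal (lengthRatio x n) • volume := by
  have hr := lengthRatio_pos hx hN n
  set c := x 0 - (lengthRatio x n)⁻¹ * x n.castSucc
  have hL : Linv x n = (· + c) ∘ ((lengthRatio x n)⁻¹ * ·) := funext (Linv_eq n)
  rw [hL, ← Measure.map_map (measurable_add_const c) (measurable_const_mul _),
    Real.map_volume_mul_left (inv_ne_zero hr.ne'), Measure.map_smul, map_add_right_eq_self,
    inv_inv, abs_of_pos hr]

lemma subInt_subset_Icc (n : Fin N) : subInt x n ⊆ Icc (x n.castSucc) (x n.succ) := by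
  unfold subInt
  split
  exacts [subset_rfl, Ioc_subset_Icc_self]

lemma Ioc_subset_subInt (n : Fin N) : Ioc (x n.castSucc) (x n.succ) ⊆ subInt x n := by
  unfold subInt
  split
  exacts [Ioc_subset_Icc_self, subset_rfl]

lemma subInt_ae_eq_Icc (n : Fin N) : subInt x n =ᵐ[volume] Icc (x n.castSucc) (x n.succ) := by
  unfold subInt
  split
  exacts [ae_eq_refl _, Ioc_ae_eq_Icc]

lemma measurableSet_subInt (n : Fin N) : MeasurableSet (subInt x n) := by
  unfold subInt
  split
  exacts [measurableSet_Icc, measurableSet_Ioc]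

lemma map_restrict_subInt_Linv (hx : StrictMono x) (hN : 0 < N) {μ : Measure ℝ}
    (hμ : μ = volume.restrict (Icc (x 0) (x (Fin.last N)))) (n : Fin N) :
    (μ.restrict (subInt x n)).map (Linv x n) = ENNReal.ofReal (lengthRatio x n) • μ := by
  have hsub : subInt x n ⊆ Icc (x 0) (x (Fin.last N)) := (subInt_subset_Icc n).trans
    (Icc_subset_Icc (hx.monotone (Fin.zero_le _)) (hx.monotone (Fin.le_last _)))
  rw [hμ, Measure.restrict_restrict (measurableSet_subInt n), inter_eq_self_of_subset_left hsub,
    Measure.restrict_congr_set (subInt_ae_eq_Icc n), ← preimage_Linv_Icc hx hN n,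
    ← Measure.restrict_map (measurable_Linv n) measurableSet_Icc, map_Linv_volume hx hN n,
    Measure.restrict_smul]

lemma pairwise_disjoint_subInt (hx : Monotone x) : Pairwise (Disjoint on subInt x) := by
  refine (pairwise_disjoint_on _).2 fun n m hnm => ?_
  have hm : subInt x m = Ioc (x m.castSucc) (x m.succ) := if_neg (by omega)
  rw [hm]
  exact (Iic_disjoint_Ioi (hx (Fin.succ_le_castSucc_iff.2 hnm))).mono
    ((subInt_subset_Icc n).trans Icc_subset_Iic_self) Ioc_subset_Ioi_self

open Fin.NatCast in
lemma Icc_subset_iUnion_subInt (hx : Monotone x) (hN : 0 < N) :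
    Icc (x 0) (x (Fin.last N)) ⊆ ⋃ n, subInt x n := by
  rw [← Icc_union_Ioc_eq_Icc le_rfl (hx (Fin.zero_le _)), Icc_self]
  refine union_subset ?_ ?_
  · refine singleton_subset_iff.2 (mem_iUnion.2 ⟨⟨0, hN⟩, ?_⟩)
    simpa [subInt] using hx (Fin.zero_le _)
  · have hcover := Ioc_subset_biUnion_Ioc N (fun i : ℕ => x (i : Fin (N + 1)))
    simp only [Nat.cast_zero, Fin.natCast_eq_last] at hcover
    refine hcover.trans (iUnion₂_subset fun i hi => ?_)
    have hi' : i < N := Finset.mem_range.1 hi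
    have hcast : ((i : ℕ) : Fin (N + 1)) = (⟨i, hi'⟩ : Fin N).castSucc :=
      Fin.ext (by simp [Nat.mod_eq_of_lt (by omega : i < N + 1)])
    refine subset_iUnion_of_subset ⟨i, hi'⟩ (subset_trans ?_ (Ioc_subset_subInt _))
    rw [Nat.cast_succ, hcast, Fin.coeSucc_eq_succ]

end Partition

lemma SelfRef.sub {N : ℕ} {μ : Measure ℝ} {x : Fin (N + 1) → ℝ} {α : Fin N → ℝ → ℝ}
    {f f' b h h' : ℝ → ℝ} (H : SelfRef μ x α f b h) (H' : SelfRef μ x α f' b h') :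
    SelfRef μ x α (f - f') 0 (h - h') := fun n => by
  filter_upwards [H n, H' n] with t ht ht' hmem
  simp only [Pi.sub_apply, Pi.zero_apply, ht hmem, ht' hmem]
  ring

lemma eLpNorm_sub_le_of_selfRef_zero {N : ℕ} {x : Fin (N + 1) → ℝ} (hx : StrictMono x)
    (hN : 0 < N) {μ : Measure ℝ} (hμ : μ = volume.restrict (Icc (x 0) (x (Fin.last N))))
    {α : Fin N → ℝ → ℝ} (hα : ∀ n, AEStronglyMeasurable (α n) μ) {c : ℝ≥0∞}
    (hαc : ∀ n, eLpNorm (α n) ∞ μ ≤ c) {F h : ℝ → ℝ} (hh : AEStronglyMeasurable h μ)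
    (H : SelfRef μ x α F 0 h) (p : ℝ≥0∞) :
    eLpNorm (h - F) p μ ≤ c * eLpNorm h p μ := by
  have hcover : ∀ᵐ t ∂μ, t ∈ ⋃ n, subInt x n := hμ ▸
    (ae_restrict_mem measurableSet_Icc).mono fun t ht => Icc_subset_iUnion_subInt hx.monotone hN ht
  have hw : ∑ n, ENNReal.ofReal (lengthRatio x n) ≤ 1 := by
    rw [← ofReal_sum_of_nonneg fun n _ => (lengthRatio_pos hx hN n).le, sum_lengthRatio hx hN,
      ofReal_one]
  refine eLpNorm_le_of_ae_eq_comp measurableSet_subInt (pairwise_disjoint_subInt hx.monotone)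
    hcover (fun n => (measurable_Linv n).aemeasurable) (map_restrict_subInt_Linv hx hN hμ) hw
    (u := fun n => α n * h) (fun n => (hα n).mul hh) (fun n => ?_) fun n => ?_
  · refine (ae_restrict_iff' (measurableSet_subInt n)).2 ((H n).mono fun t ht hmem => ?_)
    simp [ht hmem]
  · calc eLpNorm (α n * h) p μ ≤ eLpNorm (α n) ∞ μ * eLpNorm h p μ :=
          eLpNorm_smul_le_eLpNorm_top_mul_eLpNorm p hh (α n)
      _ ≤ c * eLpNorm h p μ := by gcongr; exact hαc n

/-- For seed functions `f, f'` and any base function `b`,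
`‖(f *_T b) − (f' *_T b)‖_p ≤ (1/(1−Λ)) ‖f − f'‖_p`. -/
theorem fractal_convolution_seed_stability
    (N : ℕ) (hN : 2 ≤ N) (x : Fin (N + 1) → ℝ) (hx : StrictMono x)
    (μ : Measure ℝ) (hμ : μ = volume.restrict (Set.Icc (x 0) (x (Fin.last N))))
    (p : ℝ≥0∞) [Fact (1 ≤ p)]
    (α : Fin N → Lp ℝ ∞ μ)
    (Λ : ℝ) (hΛdef : Λ = ⨆ n : Fin N, ‖α n‖) (hΛ : Λ < 1)
    (f f' b : Lp ℝ p μ) (fb f'b : Lp ℝ p μ)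
    (hfb : SelfRef μ x (fun n => ⇑(α n)) ⇑f ⇑b ⇑fb)
    (hf'b : SelfRef μ x (fun n => ⇑(α n)) ⇑f' ⇑b ⇑f'b) :
    ‖fb - f'b‖ ≤ 1 / (1 - Λ) * ‖f - f'‖ := by
  have hN0 : 0 < N := by omega
  have hαΛ (n : Fin N) : ‖α n‖ ≤ Λ :=
    hΛdef ▸ le_ciSup (Finite.bddAbove_range fun n => ‖α n‖) n
  have hΛ0 : 0 ≤ Λ := (norm_nonneg _).trans (hαΛ ⟨0, hN0⟩)
  have hcontr_eLpNorm : eLpNorm ((⇑fb - ⇑f'b) - (⇑f - ⇑f')) p μ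
      ≤ ENNReal.ofReal Λ * eLpNorm (⇑fb - ⇑f'b) p μ :=
    eLpNorm_sub_le_of_selfRef_zero hx hN0 hμ (fun n => Lp.aestronglyMeasurable (α n))
      (fun n => by rw [← Lp.enorm_def, ← ofReal_norm]; exact ofReal_le_ofReal (hαΛ n))
      ((Lp.aestronglyMeasurable fb).sub (Lp.aestronglyMeasurable f'b)) (hfb.sub hf'b) p
  have hcontr : ‖(fb - f'b) - (f - f')‖ ≤ Λ * ‖fb - f'b‖ := by
    have hcoe : ⇑((fb - f'b) - (f - f')) =ᵐ[μ] (⇑fb - ⇑f'b) - (⇑f - ⇑f') :=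
      (Lp.coeFn_sub _ _).trans ((Lp.coeFn_sub _ _).sub (Lp.coeFn_sub _ _))
    rw [Lp.norm_def, Lp.norm_def, eLpNorm_congr_ae hcoe, eLpNorm_congr_ae (Lp.coeFn_sub fb f'b),
      ← toReal_ofReal hΛ0, ← toReal_mul]
    exact toReal_mono (mul_ne_top ofReal_ne_top ((Lp.memLp fb).sub (Lp.memLp f'b)).eLpNorm_ne_top)
      hcontr_eLpNorm
  have htri := norm_le_norm_add_norm_sub' (fb - f'b) (f - f')
  rw [one_div_mul_eq_div, le_div_iff₀ (sub_pos.2 hΛ)]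
  linarith

end
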